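/- For all n ≥ 1 and j ≥ 1, ∑_{k=0}^{⌊n/2⌋} C(n,2k) (20^k - 5^k) F_{2j}^{2k} L_{2j(n-2k)} B_{2k} = (5n/2) F_{2j} F_{2j(n-1)}. -/

import Mathlib

def lucas : ℕ → ℕ
  | 0 => 2
  | 1 => 1
  | n + 2 => lucas (n + 1) + lucas n

noncomputable def eulerPoly : ℕ → Polynomial ℚ
  | n => Polynomial.X ^ n - Polynomial.C (1/2 : ℚ) *
      ∑ k : Fin n, (n.choose k : ℚ) • eulerPoly k

noncomputable def eulerNumber (n : ℕ) : ℚ := 2 ^ n * (eulerPoly n).eval (1/2)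

open Finset PowerSeries


lemma exp_sub_one_ne_zero : exp ℚ - 1 ≠ 0 := by
  intro h
  have := congrArg (PowerSeries.coeff 1) h
  simp [coeff_exp] at this

lemma rescale_two_bps : rescale (2:ℚ) (bernoulliPowerSeries ℚ) * (exp ℚ + 1) = 2 * bernoulliPowerSeries ℚ := by
  have h0 : bernoulliPowerSeries ℚ * (exp ℚ - 1) = X := bernoulliPowerSeries_mul_exp_sub_one ℚ
  have hr : rescale (2:ℚ) (bernoulliPowerSeries ℚ) * rescale (2:ℚ) (exp ℚ - 1) = rescale (2:ℚ) X := by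
    rw [← map_mul, h0]
  have hexp : rescale (2:ℚ) (exp ℚ) = exp ℚ ^ 2 := by
    rw [exp_pow_eq_rescale_exp]; norm_num
  have hX : rescale (2:ℚ) X = 2 * X := by
    rw [rescale_X, ← map_ofNat (C (R := ℚ)) 2]
  rw [map_sub, map_one, hexp, hX] at hr
  apply mul_right_cancel₀ exp_sub_one_ne_zero
  calc rescale (2:ℚ) (bernoulliPowerSeries ℚ) * (exp ℚ + 1) * (exp ℚ - 1)
      = rescale (2:ℚ) (bernoulliPowerSeries ℚ) * (exp ℚ ^ 2 - 1) := by ring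
    _ = 2 * X := hr
    _ = 2 * (bernoulliPowerSeries ℚ * (exp ℚ - 1)) := by rw [h0]
    _ = 2 * bernoulliPowerSeries ℚ * (exp ℚ - 1) := by ring

lemma coeff_s (m : ℕ) :
    ∑ k ∈ range (m+1), (2:ℚ)^k * bernoulli k / (k.factorial * (m-k).factorial)
      + 2^m * bernoulli m / m.factorial = 2 * (bernoulli m / m.factorial) := by
  have := congrArg (PowerSeries.coeff m) rescale_two_bps
  rw [coeff_mul, Finset.Nat.sum_antidiagonal_eq_sum_range_succ_mk] at this
  simp only [coeff_rescale, bernoulliPowerSeries, coeff_mk, map_add, coeff_exp, coeff_one,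
    Algebra.algebraMap_self, RingHom.id_apply] at this
  rw [Finset.sum_range_succ] at this
  simp only [Nat.sub_self, Nat.factorial_zero, if_true, Nat.cast_one] at this
  rw [two_mul, map_add, coeff_mk] at this
  have key : ∀ x ∈ range m, (2:ℚ)^x * bernoulli x / (x.factorial * (m-x).factorial)
      = 2 ^ x * (bernoulli x / (x.factorial:ℚ)) * (1 / ((m - x).factorial:ℚ) + if m - x = 0 then 1 else 0) := by
    intro x hx
    rw [if_neg (by simp at hx; omega)]
    ring
  rw [Finset.sum_range_succ, Finset.sum_congr rfl key]
  simp only [Nat.sub_self, Nat.factorial_zero, Nat.cast_one]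
  linear_combination this

lemma s_id (m : ℕ) :
    ∑ k ∈ range (m+1), (m.choose k : ℚ) * 2^k * bernoulli k = (2 - 2^m) * bernoulli m := by
  have h := coeff_s m
  have hfac : (m.factorial : ℚ) ≠ 0 := by exact_mod_cast m.factorial_ne_zero
  have : ∑ k ∈ range (m+1), (m.choose k : ℚ) * 2^k * bernoulli k
      = m.factorial * ∑ k ∈ range (m+1), (2:ℚ)^k * bernoulli k / (k.factorial * (m-k).factorial) := by
    rw [Finset.mul_sum]
    refine Finset.sum_congr rfl fun k hk => ?_
    rw [Nat.cast_choose ℚ (by simp at hk; omega)]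
    have h1 : (k.factorial : ℚ) ≠ 0 := by exact_mod_cast k.factorial_ne_zero
    have h2 : ((m-k).factorial : ℚ) ≠ 0 := by exact_mod_cast (m-k).factorial_ne_zero
    field_simp
  rw [this, eq_sub_of_add_eq h]
  field_simp



lemma G_expand (n : ℕ) (c t z : ℝ) :
    ∑ k ∈ range (n+1), (n.choose k : ℝ) * c^k * (bernoulli k : ℝ) * t^k * (z+t)^(n-k)
    = ∑ m ∈ range (n+1), (n.choose m : ℝ) * t^m * z^(n-m) *
        (∑ k ∈ range (m+1), (m.choose k : ℝ) * c^k * (bernoulli k : ℝ)) := by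
  have step1 : ∀ k ∈ range (n+1),
      (n.choose k : ℝ) * c^k * (bernoulli k : ℝ) * t^k * (z+t)^(n-k)
      = ∑ m ∈ Finset.Ico k (n+1),
          (n.choose k : ℝ) * ((n-k).choose (m-k) : ℝ) * c^k * (bernoulli k : ℝ) * t^m * z^(n-m) := by
    intro k hk
    rw [mem_range] at hk
    rw [Finset.sum_Ico_eq_sum_range]
    have hnk : n + 1 - k = (n - k) + 1 := by omega
    rw [hnk]
    rw [add_comm z t, add_pow]
    rw [Finset.mul_sum]
    refine Finset.sum_congr rfl fun i hi => ?_
    rw [mem_range] at hi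
    have e1 : k + i - k = i := by omega
    have e2 : n - (k + i) = n - k - i := by omega
    have e3 : t^(k+i) = t^k * t^i := pow_add t k i
    rw [e1, e2, e3]
    ring
  rw [Finset.sum_congr rfl step1, Finset.range_eq_Ico, Finset.sum_Ico_Ico_comm]
  refine Finset.sum_congr rfl fun m hm => ?_
  rw [mem_Ico] at hm
  rw [← Finset.range_eq_Ico]  -- inner Ico 0 (m+1) to range
  rw [Finset.mul_sum]
  refine Finset.sum_congr rfl fun k hk => ?_
  rw [mem_range] at hk
  have hc : (n.choose m : ℝ) * (m.choose k : ℝ) = (n.choose k : ℝ) * ((n-k).choose (m-k) : ℝ) := by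
    rw [← Nat.cast_mul, ← Nat.cast_mul, Nat.choose_mul (by omega)]
  linear_combination (- c^k * ((bernoulli k : ℚ) : ℝ) * t^m * z^(n-m)) * hc



lemma one_id (m : ℕ) :
    ∑ k ∈ range (m+1), (m.choose k : ℚ) * bernoulli k
      = bernoulli m + if m = 1 then 1 else 0 := by
  rw [Finset.sum_range_succ, sum_bernoulli, Nat.choose_self]
  push_cast
  ring

lemma bodd {b : ℕ} (h : b % 2 = 1) (h1 : b ≠ 1) : bernoulli b = 0 := by
  rw [bernoulli_eq_bernoulli'_of_ne_one h1]
  exact bernoulli'_eq_zero_of_odd (Nat.odd_iff.mpr h) (by omega)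

lemma even_split (n : ℕ) (hn : 1 ≤ n) (w : ℕ → ℝ) :
    ∑ m ∈ range (n+1), (n.choose m : ℝ) * ((bernoulli m : ℚ) : ℝ) * w m
    = ∑ k ∈ range (n/2+1), (n.choose (2*k) : ℝ) * ((bernoulli (2*k) : ℚ) : ℝ) * w (2*k)
      - (n : ℝ)/2 * w 1 := by
  rw [← Finset.sum_filter_add_sum_filter_not (range (n+1)) (fun m => m % 2 = 0)]
  have heven : ∑ m ∈ (range (n+1)).filter (fun m => m % 2 = 0),
      (n.choose m : ℝ) * ((bernoulli m : ℚ) : ℝ) * w m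
      = ∑ k ∈ range (n/2+1), (n.choose (2*k) : ℝ) * ((bernoulli (2*k) : ℚ) : ℝ) * w (2*k) := by
    refine Finset.sum_nbij' (fun m => m / 2) (fun k => 2 * k) ?_ ?_ ?_ ?_ ?_
    · intro a ha; simp only [mem_filter, mem_range] at ha ⊢; omega
    · intro a ha; simp only [mem_filter, mem_range] at ha ⊢; omega
    · intro a ha; simp only [mem_filter, mem_range] at ha; omega
    · intro a ha; omega
    · intro a ha; simp only [mem_filter, mem_range] at ha
      have : 2 * (a / 2) = a := by omega
      rw [this]
  have hodd : ∑ m ∈ (range (n+1)).filter (fun m => ¬ m % 2 = 0),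
      (n.choose m : ℝ) * ((bernoulli m : ℚ) : ℝ) * w m = - ((n:ℝ)/2 * w 1) := by
    rw [Finset.sum_eq_single_of_mem 1]
    · rw [bernoulli_one, Nat.choose_one_right]
      push_cast
      ring
    · simp only [mem_filter, mem_range]; omega
    · intro b hb hb1
      simp only [mem_filter, mem_range] at hb
      rw [bodd (by omega) hb1]
      simp
  rw [heven, hodd]
  ring


lemma one_idR (m : ℕ) : ∑ k ∈ range (m+1), (m.choose k : ℝ) * ((bernoulli k : ℚ) : ℝ)
    = ((bernoulli m : ℚ) : ℝ) + if m = 1 then 1 else 0 := by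
  have h2 := congrArg (fun q : ℚ => (q : ℝ)) (one_id m)
  push_cast at h2
  simpa [apply_ite (fun q : ℚ => (q : ℝ))] using h2

lemma s_idR (m : ℕ) : ∑ k ∈ range (m+1), (m.choose k : ℝ) * 2^k * ((bernoulli k : ℚ) : ℝ)
    = (2 - 2^m) * ((bernoulli m : ℚ) : ℝ) := by
  have h2 := congrArg (fun q : ℚ => (q : ℝ)) (s_id m)
  push_cast at h2
  exact h2

lemma I1R (n : ℕ) (hn : 1 ≤ n) (t z : ℝ) :
    ∑ k ∈ range (n+1), (n.choose k : ℝ) * ((bernoulli k : ℚ) : ℝ) * t^k * (z+t)^(n-k)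
    = ∑ k ∈ range (n+1), (n.choose k : ℝ) * ((bernoulli k : ℚ) : ℝ) * t^k * z^(n-k)
      + n * t * z^(n-1) := by
  have h := G_expand n 1 t z
  simp only [one_pow, mul_one] at h
  rw [h]
  have inner : ∀ m ∈ range (n+1),
      (n.choose m : ℝ) * t^m * z^(n-m) * (∑ k ∈ range (m+1), (m.choose k : ℝ) * ((bernoulli k : ℚ) : ℝ))
      = (n.choose m : ℝ) * ((bernoulli m : ℚ) : ℝ) * t^m * z^(n-m)
        + (if m = 1 then (n.choose m : ℝ) * t^m * z^(n-m) else 0) := by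
    intro m _
    rw [one_idR]
    split_ifs <;> ring
  rw [Finset.sum_congr rfl inner, Finset.sum_add_distrib]
  congr 1
  rw [Finset.sum_ite_eq' (range (n+1)) 1]
  have h1 : 1 ∈ range (n+1) := by simp; omega
  rw [if_pos h1, Nat.choose_one_right]
  ring

lemma I2R (n : ℕ) (t z : ℝ) :
    ∑ k ∈ range (n+1), (n.choose k : ℝ) * ((bernoulli k : ℚ) : ℝ) * (2*t)^k * ((z+t)^(n-k) + z^(n-k))
    = 2 * ∑ k ∈ range (n+1), (n.choose k : ℝ) * ((bernoulli k : ℚ) : ℝ) * t^k * z^(n-k) := by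
  have h := G_expand n 2 t z
  have e1 : ∀ k ∈ range (n+1),
      (n.choose k : ℝ) * ((bernoulli k : ℚ) : ℝ) * (2*t)^k * ((z+t)^(n-k) + z^(n-k))
      = (n.choose k : ℝ) * (2:ℝ)^k * ((bernoulli k : ℚ) : ℝ) * t^k * (z+t)^(n-k)
        + (n.choose k : ℝ) * (2:ℝ)^k * ((bernoulli k : ℚ) : ℝ) * t^k * z^(n-k) := by
    intro k _
    rw [mul_pow]
    ring
  rw [Finset.sum_congr rfl e1, Finset.sum_add_distrib, h, Finset.mul_sum, ← Finset.sum_add_distrib]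
  refine Finset.sum_congr rfl fun m _ => ?_
  rw [s_idR]
  ring

open goldenRatio in
lemma lucas_real : ∀ m : ℕ, (lucas m : ℝ) = φ ^ m + ψ ^ m
  | 0 => by norm_num [lucas]
  | 1 => by norm_num [lucas]
  | (m+2) => by
    rw [lucas, Nat.cast_add, lucas_real (m+1), lucas_real m]
    have h1 : φ ^ (m+2) = φ^(m+1) + φ^m := by
      have : φ ^ (m+2) = φ^m * φ^2 := by ring
      rw [this, Real.goldenRatio_sq]; ring
    have h2 : ψ ^ (m+2) = ψ^(m+1) + ψ^m := by
      have : ψ ^ (m+2) = ψ^m * ψ^2 := by ring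
      rw [this, Real.goldenConj_sq]; ring
    rw [h1, h2]; ring


open goldenRatio in
theorem stmt5 (n j : ℕ) (hn : 1 ≤ n) (hj : 1 ≤ j) :
    ∑ k ∈ Finset.range (n / 2 + 1), (n.choose (2 * k) : ℚ) *
      ((20 : ℚ) ^ k - 5 ^ k) * (Nat.fib (2 * j) : ℚ) ^ (2 * k) *
      (lucas (2 * j * (n - 2 * k)) : ℚ) * bernoulli (2 * k)
      = 5 * (n : ℚ) / 2 * (Nat.fib (2 * j) : ℚ) * (Nat.fib (2 * j * (n - 1)) : ℚ) := by
  have h5 : Real.sqrt 5 * Real.sqrt 5 = 5 := Real.mul_self_sqrt (by norm_num)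
  have hfib : ∀ m : ℕ, Real.sqrt 5 * (Nat.fib m : ℝ) = φ^m - ψ^m := by
    intro m
    rw [Real.coe_fib_eq, mul_div_cancel₀]
    exact Real.sqrt_ne_zero'.mpr (by norm_num)
  set X : ℝ := φ^(2*j) with hXdef
  set Y : ℝ := ψ^(2*j) with hYdef
  set D : ℝ := Real.sqrt 5 * (Nat.fib (2*j) : ℝ) with hDdef
  have hX : X = Y + D := by
    have := hfib (2*j)
    rw [hXdef, hYdef, hDdef]
    linarith
  have hD2 : D^2 = 5 * (Nat.fib (2*j) : ℝ)^2 := by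
    rw [hDdef]
    nlinarith [h5]
  -- the real-number version of the statement
  have R : ∑ k ∈ Finset.range (n / 2 + 1), (n.choose (2 * k) : ℝ) *
      ((20 : ℝ) ^ k - 5 ^ k) * (Nat.fib (2 * j) : ℝ) ^ (2 * k) *
      ((lucas (2 * j * (n - 2 * k)) : ℕ) : ℝ) * ((bernoulli (2 * k) : ℚ) : ℝ)
      = 5 * (n : ℝ) / 2 * (Nat.fib (2 * j) : ℝ) * (Nat.fib (2 * j * (n - 1)) : ℝ) := by
    -- step 1 : termwise rewrite to E(2D) - E(D)
    have hterm : ∀ k ∈ range (n/2+1),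
        (n.choose (2 * k) : ℝ) * ((20 : ℝ) ^ k - 5 ^ k) * (Nat.fib (2 * j) : ℝ) ^ (2 * k) *
          ((lucas (2 * j * (n - 2 * k)) : ℕ) : ℝ) * ((bernoulli (2 * k) : ℚ) : ℝ)
        = (n.choose (2*k) : ℝ) * ((bernoulli (2*k) : ℚ) : ℝ) * ((2*D)^(2*k) * (X^(n-2*k) + Y^(n-2*k)))
          - (n.choose (2*k) : ℝ) * ((bernoulli (2*k) : ℚ) : ℝ) * (D^(2*k) * (X^(n-2*k) + Y^(n-2*k))) := by
      intro k hk
      have hl : ((lucas (2 * j * (n - 2 * k)) : ℕ) : ℝ) = X^(n-2*k) + Y^(n-2*k) := by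
        rw [lucas_real, hXdef, hYdef, ← pow_mul, ← pow_mul]
      have hDk : D^(2*k) = 5^k * (Nat.fib (2*j) : ℝ)^(2*k) := by
        rw [pow_mul, pow_mul, hD2, mul_pow]
      have h2Dk : (2*D)^(2*k) = 20^k * (Nat.fib (2*j) : ℝ)^(2*k) := by
        rw [pow_mul, pow_mul, mul_pow, hD2]
        rw [show (2:ℝ)^2 * (5 * (Nat.fib (2*j):ℝ)^2) = 20 * (Nat.fib (2*j):ℝ)^2 by ring, mul_pow]
      rw [hl, hDk, h2Dk]
      ring
    rw [Finset.sum_congr rfl hterm, Finset.sum_sub_distrib]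
    -- step 2 : even split for both
    have hE2 := even_split n hn (fun m => (2*D)^m * (X^(n-m) + Y^(n-m)))
    have hE1 := even_split n hn (fun m => D^m * (X^(n-m) + Y^(n-m)))
    have hI2 := I2R n D Y
    have hI1 := I1R n hn D Y
    rw [← hX] at hI2 hI1
    have hF2 : ∑ m ∈ range (n+1), (n.choose m : ℝ) * ((bernoulli m : ℚ) : ℝ) * ((2*D)^m * (X^(n-m) + Y^(n-m)))
        = 2 * ∑ k ∈ range (n+1), (n.choose k : ℝ) * ((bernoulli k : ℚ) : ℝ) * D^k * Y^(n-k) := by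
      rw [← hI2]
      exact Finset.sum_congr rfl fun k _ => by ring
    have hF1 : ∑ m ∈ range (n+1), (n.choose m : ℝ) * ((bernoulli m : ℚ) : ℝ) * (D^m * (X^(n-m) + Y^(n-m)))
        = (∑ k ∈ range (n+1), (n.choose k : ℝ) * ((bernoulli k : ℚ) : ℝ) * D^k * Y^(n-k)
            + n * D * Y^(n-1))
          + ∑ k ∈ range (n+1), (n.choose k : ℝ) * ((bernoulli k : ℚ) : ℝ) * D^k * Y^(n-k) := by
      have split : ∑ m ∈ range (n+1), (n.choose m : ℝ) * ((bernoulli m : ℚ) : ℝ) * (D^m * (X^(n-m) + Y^(n-m)))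
          = (∑ k ∈ range (n+1), (n.choose k : ℝ) * ((bernoulli k : ℚ) : ℝ) * D^k * X^(n-k))
            + ∑ k ∈ range (n+1), (n.choose k : ℝ) * ((bernoulli k : ℚ) : ℝ) * D^k * Y^(n-k) := by
        rw [← Finset.sum_add_distrib]
        exact Finset.sum_congr rfl fun k _ => by ring
      rw [split, hI1]
    have hf2 := hfib (2*j*(n-1))
    rw [pow_mul φ (2*j) (n-1), pow_mul ψ (2*j) (n-1), ← hXdef, ← hYdef] at hf2
    linear_combination -hE2 + hE1 + hF2 - hF1 - ((n:ℝ)/2 * D) * hf2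
      + ((n:ℝ)/2 * Real.sqrt 5 * (Nat.fib (2*j*(n-1)) : ℝ)) * hDdef
      + ((n:ℝ)/2 * (Nat.fib (2*j) : ℝ) * (Nat.fib (2*j*(n-1)) : ℝ)) * h5
  apply (Rat.cast_injective (α := ℝ))
  push_cast
  convert R using 1
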